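/- For every N ≥ 1, Zpi(N) ≤ ZQ(N); that is, there is an injection from the set of valid p-i configurations on the N×N grid into the set of valid Q-charge configurations on the N×N grid (obtained by restricting the Q-charge states on the bonds crossed by a fixed diagonal line to lie in {0, 2}, which determines the lift of each p-i bond state to a Q-charge bond state). -/

import Mathlib

/-!
Lift a `p`-`i` configuration bond by bond, according to the parity of the diagonal `i + j`
on which the bond `(i, j)` lies: on even diagonals `p ↦ 1`, `i ↦ 3`, on odd diagonals
`p ↦ 2`, `i ↦ 0`, so the bonds on odd diagonals carry charges in `{0, 2}`. Both bonds
entering a vertex of diagonal `d` lie on diagonal `d` and both leaving it on diagonal `d + 1`.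
Across such a vertex the charge changes by `(-1) ^ d` along both directions when all four
bonds are `p`, and by `-(-1) ^ d` along both directions when the vertex has one `i` bond
horizontally and one vertically; so the lift satisfies the `Q`-charge rule, and it is
injective bond by bond.
-/

/-- The `p`-`i` constraint on bond states (`true` = state `i`, `false` = state
`p`): around every vertex, either all four incident bond states are `p`, or
exactly two of them are `i`, one horizontal and one vertical. -/
def PiValid (N : ℕ) (h : Fin N × Fin (N + 1) → Bool)
    (v : Fin (N + 1) × Fin N → Bool) : Prop :=
  ∀ i j : Fin N,
    (h (i, j.castSucc) = false ∧ h (i, j.succ) = false ∧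
      v (i.castSucc, j) = false ∧ v (i.succ, j) = false) ∨
    (h (i, j.castSucc) ≠ h (i, j.succ) ∧ v (i.castSucc, j) ≠ v (i.succ, j))

/-- The number of `p`-`i` configurations on the `N × N` grid. -/
noncomputable def Zpi (N : ℕ) : ℕ :=
  Nat.card {p : (Fin N × Fin (N + 1) → Bool) × (Fin (N + 1) × Fin N → Bool) //
    PiValid N p.1 p.2}

/-- The `Q`-charge constraint on bond states: around every vertex, the south
and east bond states differ from the north and west bond states (respectively)
by a common `s ∈ {+1, -1}`. -/
def QValid (N : ℕ) (h : Fin N × Fin (N + 1) → Fin 4)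
    (v : Fin (N + 1) × Fin N → Fin 4) : Prop :=
  ∀ i j : Fin N, ∃ s : ℤ, (s = 1 ∨ s = -1) ∧
    ((h (i, j.succ) : ℤ) - ((h (i, j.castSucc)) : ℤ) = s) ∧
    ((v (i.succ, j) : ℤ) - ((v (i.castSucc, j)) : ℤ) = s)

/-- The number of `Q`-charge configurations on the `N × N` grid. -/
noncomputable def ZQ (N : ℕ) : ℕ :=
  Nat.card {p : (Fin N × Fin (N + 1) → Fin 4) × (Fin (N + 1) × Fin N → Fin 4) //
    QValid N p.1 p.2}

def piLift (n : ℕ) (b : Bool) : Fin 4 :=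
  if n % 2 = 0 then (if b then 3 else 1) else (if b then 0 else 2)

theorem piLift_injective (n : ℕ) : Function.Injective (piLift n) := by
  unfold piLift
  split <;> decide

theorem piLift_succ_sub_piLift_false (n : ℕ) :
    (piLift (n + 1) false : ℤ) - piLift n false = (-1) ^ n := by
  rcases Nat.even_or_odd n with hn | hn
  · have hn2 := Nat.even_iff.mp hn
    simp [piLift, hn2, Nat.succ_mod_two_eq_one_iff.mpr hn2, hn.neg_one_pow]
  · have hn2 := Nat.odd_iff.mp hn
    simp [piLift, hn2, Nat.succ_mod_two_eq_zero_iff.mpr hn2, hn.neg_one_pow]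

theorem piLift_succ_sub_piLift_of_ne (n : ℕ) {b b' : Bool} (h : b ≠ b') :
    (piLift (n + 1) b' : ℤ) - piLift n b = -(-1) ^ n := by
  obtain rfl : b' = !b := by cases b <;> cases b' <;> simp_all
  rcases Nat.even_or_odd n with hn | hn
  · have hn2 := Nat.even_iff.mp hn
    cases b <;> simp [piLift, hn2, Nat.succ_mod_two_eq_one_iff.mpr hn2, hn.neg_one_pow]
  · have hn2 := Nat.odd_iff.mp hn
    cases b <;> simp [piLift, hn2, Nat.succ_mod_two_eq_zero_iff.mpr hn2, hn.neg_one_pow]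

theorem exists_sign_piLift_of_pi_vertex (d : ℕ) {w e n s : Bool}
    (hv : (w = false ∧ e = false ∧ n = false ∧ s = false) ∨ (w ≠ e ∧ n ≠ s)) :
    ∃ σ : ℤ, (σ = 1 ∨ σ = -1) ∧ (piLift (d + 1) e : ℤ) - piLift d w = σ ∧
      (piLift (d + 1) s : ℤ) - piLift d n = σ := by
  rcases hv with ⟨rfl, rfl, rfl, rfl⟩ | ⟨hwe, hns⟩
  · exact ⟨(-1) ^ d, neg_one_pow_eq_or ℤ d, piLift_succ_sub_piLift_false d,
      piLift_succ_sub_piLift_false d⟩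
  · refine ⟨-(-1) ^ d, ?_, piLift_succ_sub_piLift_of_ne d hwe, piLift_succ_sub_piLift_of_ne d hns⟩
    rcases neg_one_pow_eq_or ℤ d with h | h <;> simp [h]

def diagLift {a b : ℕ} (c : Fin a × Fin b → Bool) : Fin a × Fin b → Fin 4 :=
  fun q => piLift (q.1 + q.2) (c q)

theorem diagLift_injective (a b : ℕ) : Function.Injective (@diagLift a b) :=
  fun _ _ h => funext fun q => piLift_injective _ (congrFun h q)

theorem qValid_diagLift {N : ℕ} {h : Fin N × Fin (N + 1) → Bool}
    {v : Fin (N + 1) × Fin N → Bool} (hpi : PiValid N h v) :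
    QValid N (diagLift h) (diagLift v) := by
  intro i j
  have hsucc_right : (i : ℕ) + (j.succ : ℕ) = i + j + 1 := by simp [add_assoc]
  have hsucc_left : (i.succ : ℕ) + (j : ℕ) = i + j + 1 := by simp [add_right_comm]
  dsimp only [diagLift]
  rw [hsucc_right, hsucc_left, Fin.val_castSucc, Fin.val_castSucc]
  exact exists_sign_piLift_of_pi_vertex (i + j) (hpi i j)

theorem pi_le_Qcharge_general (N : ℕ) : Zpi N ≤ ZQ N := by
  refine Nat.card_le_card_of_injective
    (fun p => ⟨(diagLift p.1.1, diagLift p.1.2), qValid_diagLift p.2⟩) ?_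
  intro p q hpq
  have hpq' := congrArg Subtype.val hpq
  simp only [Prod.mk.injEq] at hpq'
  exact Subtype.ext (Prod.ext (diagLift_injective _ _ hpq'.1) (diagLift_injective _ _ hpq'.2))

/-- For every `N ≥ 1`, `Zpi(N) ≤ ZQ(N)`: the valid `p`-`i` configurations on
the `N × N` grid inject into the valid `Q`-charge configurations. -/
theorem pi_le_Qcharge (N : ℕ) (hN : 1 ≤ N) : Zpi N ≤ ZQ N :=
  pi_le_Qcharge_general N
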